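/- The symmetric order equals 4: the system of symmetric polynomial equalities together with the polynomial inequality admits non-trivial real solutions for r = 3 but no non-trivial real solutions for r = 4. -/

import Mathlib

/-!
For `ℓ ≤ r` the truncation conditions `α₁ + α₂ ≤ r`, `β₁ + β₂ ≤ r - (α₁ + α₂)` are implied by
`α₁ + β₁ + 2α₂ + 2β₂ = ℓ`, so the `ℓ`-th equation does not depend on the order `r`, and the first
one vanishes identically. The point `(x₁, x₂, y₁, y₂, y₃) = (1, 1, 1, 1, 0)` solves the equations
`ℓ = 2, 3` and makes both sides of the inequality equal to `3`; it is therefore a non-trivial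
solution of every order `r ≤ 3`.

In order `4`, the equation `ℓ = 2` gives `y₁ = 4x₁x₂ - 2x₁² - y₂`. After this substitution
`x₁ e₄ + (y₂/2 - 2x₁x₂ + x₁²/2) e₃` factors as `t Q` with `t = x₂ - x₁/2` and
`Q = (y₂ - 2x₁t)²/2 + 2x₁²t²/3 + x₁⁴/6`, which is positive on non-trivial points; hence
`x₁ = 2x₂`, and then `e₃, e₄` force `y₁ = y₃ = -y₂`. The inequality becomes `x₁⁴ + 2y₂² ≤ 0`.
-/

open Finset

/-- Index set of the first sum of the symmetric system: quadruples `(α₁, α₂, β₁, β₂)` with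
`α₁ + β₁ + 2α₂ + 2β₂ = ℓ`, `1 ≤ α₁ + α₂ ≤ r`, and `β₁ + β₂ ≤ r - (α₁ + α₂)`. -/
def symIdx1 (r ℓ : ℕ) : Finset (ℕ × ℕ × ℕ × ℕ) :=
  ((Finset.range (ℓ + 1)) ×ˢ (Finset.range (ℓ + 1)) ×ˢ (Finset.range (ℓ + 1)) ×ˢ
      (Finset.range (ℓ + 1))).filter
    (fun q => q.1 + q.2.2.1 + 2 * q.2.1 + 2 * q.2.2.2 = ℓ ∧ 1 ≤ q.1 + q.2.1 ∧
      q.1 + q.2.1 ≤ r ∧ q.2.2.1 + q.2.2.2 ≤ r - (q.1 + q.2.1))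

/-- Index set of the second sum: pairs `(α₁, α₂)` with `α₁ + 2α₂ = ℓ`, `1 ≤ α₁ + α₂ ≤ r`. -/
def symIdx2 (r ℓ : ℕ) : Finset (ℕ × ℕ) :=
  ((Finset.range (ℓ + 1)) ×ˢ (Finset.range (ℓ + 1))).filter
    (fun p => p.1 + 2 * p.2 = ℓ ∧ 1 ≤ p.1 + p.2 ∧ p.1 + p.2 ≤ r)

/-- Left-hand side of the `ℓ`-th equation of the symmetric system of order `r`. -/
noncomputable def symLHS (r ℓ : ℕ) (x₁ x₂ y₁ y₂ y₃ : ℝ) : ℝ :=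
  (∑ q ∈ symIdx1 r ℓ,
      2 ^ q.2.2.1 * (-x₁) ^ q.1 * x₂ ^ q.2.2.1 * y₂ ^ q.2.1 * y₃ ^ q.2.2.2 /
        (2 ^ (q.2.1 + q.2.2.2) * (Nat.factorial q.1 : ℝ) * (Nat.factorial q.2.1 : ℝ) *
          (Nat.factorial q.2.2.1 : ℝ) * (Nat.factorial q.2.2.2 : ℝ)))
    + ∑ p ∈ symIdx2 r ℓ,
        x₁ ^ p.1 * y₁ ^ p.2 / (2 ^ p.2 * (Nat.factorial p.1 : ℝ) * (Nat.factorial p.2 : ℝ))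

/-- `(x₁, x₂, y₁, y₂, y₃)` solves the equalities of the symmetric system of order `r`. -/
def symSolEq (r : ℕ) (x₁ x₂ y₁ y₂ y₃ : ℝ) : Prop :=
  ∀ ℓ ∈ Finset.Icc 1 r, symLHS r ℓ x₁ x₂ y₁ y₂ y₃ = 0

/-- The polynomial inequality of the symmetric system of order `r`:
`|x₁|^r + |y₁|^{r/2} + |y₂|^{r/2} ≤ |2x₂-x₁|^r + |y₃-y₁|^{r/2} + |y₂+y₃|^{r/2}`. -/
noncomputable def symIneq (r : ℕ) (x₁ x₂ y₁ y₂ y₃ : ℝ) : Prop :=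
  |x₁| ^ (r : ℝ) + |y₁| ^ ((r : ℝ) / 2) + |y₂| ^ ((r : ℝ) / 2) ≤
    |2 * x₂ - x₁| ^ (r : ℝ) + |y₃ - y₁| ^ ((r : ℝ) / 2) + |y₂ + y₃| ^ ((r : ℝ) / 2)

/-- A solution is non-trivial if at least one of `x₁, y₁, y₂` is nonzero. -/
def nontrivSol (x₁ y₁ y₂ : ℝ) : Prop := x₁ ≠ 0 ∨ y₁ ≠ 0 ∨ y₂ ≠ 0

/-- The symmetric order `r̄_sym`: the smallest `r ≥ 1` such that the symmetric system
(equalities together with the inequality) of order `r` has no non-trivial real solution. -/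
noncomputable def symOrder : ℕ :=
  sInf {r : ℕ | 1 ≤ r ∧ ¬ ∃ x₁ x₂ y₁ y₂ y₃ : ℝ,
    nontrivSol x₁ y₁ y₂ ∧ symSolEq r x₁ x₂ y₁ y₂ y₃ ∧ symIneq r x₁ x₂ y₁ y₂ y₃}

lemma symIdx1_eq_of_le {r s ℓ : ℕ} (hr : ℓ ≤ r) (hs : ℓ ≤ s) : symIdx1 r ℓ = symIdx1 s ℓ := by
  ext ⟨a₁, a₂, b₁, b₂⟩
  simp only [symIdx1, mem_filter, mem_product, mem_range]
  omega

lemma symIdx2_eq_of_le {r s ℓ : ℕ} (hr : ℓ ≤ r) (hs : ℓ ≤ s) : symIdx2 r ℓ = symIdx2 s ℓ := by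
  ext ⟨a₁, a₂⟩
  simp only [symIdx2, mem_filter, mem_product, mem_range]
  omega

lemma symLHS_eq_of_le {r s ℓ : ℕ} (hr : ℓ ≤ r) (hs : ℓ ≤ s) :
    symLHS r ℓ = symLHS s ℓ := by
  ext x₁ x₂ y₁ y₂ y₃
  rw [symLHS, symLHS, symIdx1_eq_of_le hr hs, symIdx2_eq_of_le hr hs]

lemma symSolEq.mono {r s : ℕ} {x₁ x₂ y₁ y₂ y₃ : ℝ} (h : symSolEq s x₁ x₂ y₁ y₂ y₃)
    (hrs : r ≤ s) : symSolEq r x₁ x₂ y₁ y₂ y₃ := by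
  intro ℓ hℓ
  have hℓr := (mem_Icc.1 hℓ).2
  rw [symLHS_eq_of_le hℓr (hℓr.trans hrs)]
  exact h ℓ (mem_Icc.2 ⟨(mem_Icc.1 hℓ).1, hℓr.trans hrs⟩)

section Evaluation

variable {r : ℕ} (x₁ x₂ y₁ y₂ y₃ : ℝ)

lemma symLHS_one (hr : 1 ≤ r) : symLHS r 1 x₁ x₂ y₁ y₂ y₃ = 0 := by
  rw [symLHS_eq_of_le hr le_rfl, symLHS, show symIdx1 1 1 = {(1, 0, 0, 0)} by decide,
    show symIdx2 1 1 = {(1, 0)} by decide]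
  simp

lemma symLHS_two (hr : 2 ≤ r) :
    symLHS r 2 x₁ x₂ y₁ y₂ y₃ = x₁ ^ 2 - 2 * x₁ * x₂ + y₁ / 2 + y₂ / 2 := by
  rw [symLHS_eq_of_le hr le_rfl, symLHS,
    show symIdx1 2 2 = {(0, 1, 0, 0), (1, 0, 1, 0), (2, 0, 0, 0)} by decide,
    show symIdx2 2 2 = {(0, 1), (2, 0)} by decide]
  simp [Nat.factorial]
  ring

lemma symLHS_three (hr : 3 ≤ r) :
    symLHS r 3 x₁ x₂ y₁ y₂ y₃ = x₂ * y₂ - x₁ * y₃ / 2 - x₁ * y₂ / 2 + x₁ * y₁ / 2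
      - 2 * x₁ * x₂ ^ 2 + x₁ ^ 2 * x₂ := by
  rw [symLHS_eq_of_le hr le_rfl, symLHS,
    show symIdx1 3 3 = {(0, 1, 1, 0), (1, 0, 0, 1), (1, 0, 2, 0), (1, 1, 0, 0), (2, 0, 1, 0),
      (3, 0, 0, 0)} by decide,
    show symIdx2 3 3 = {(1, 1), (3, 0)} by decide]
  simp [Nat.factorial]
  ring

lemma symLHS_four (hr : 4 ≤ r) :
    symLHS r 4 x₁ x₂ y₁ y₂ y₃ = y₂ * y₃ / 4 + y₂ ^ 2 / 8 + y₁ ^ 2 / 8 + x₂ ^ 2 * y₂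
      - x₁ * x₂ * y₃ - x₁ * x₂ * y₂ - 4 / 3 * x₁ * x₂ ^ 3 + x₁ ^ 2 * y₃ / 4 + x₁ ^ 2 * y₂ / 4
      + x₁ ^ 2 * y₁ / 4 + x₁ ^ 2 * x₂ ^ 2 - x₁ ^ 3 * x₂ / 3 + x₁ ^ 4 / 12 := by
  rw [symLHS_eq_of_le hr le_rfl, symLHS,
    show symIdx1 4 4 = {(0, 1, 0, 1), (0, 1, 2, 0), (0, 2, 0, 0), (1, 0, 1, 1), (1, 0, 3, 0),
      (1, 1, 1, 0), (2, 0, 0, 1), (2, 0, 2, 0), (2, 1, 0, 0), (3, 0, 1, 0), (4, 0, 0, 0)} by decide,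
    show symIdx2 4 4 = {(0, 2), (2, 1), (4, 0)} by decide]
  simp [Nat.factorial]
  ring

end Evaluation

def SymSolvable (r : ℕ) : Prop :=
  ∃ x₁ x₂ y₁ y₂ y₃ : ℝ,
    nontrivSol x₁ y₁ y₂ ∧ symSolEq r x₁ x₂ y₁ y₂ y₃ ∧ symIneq r x₁ x₂ y₁ y₂ y₃

lemma symSolEq_three_one_one_one_one_zero : symSolEq 3 1 1 1 1 0 := by
  intro ℓ hℓ
  obtain rfl | rfl | rfl : ℓ = 1 ∨ ℓ = 2 ∨ ℓ = 3 := by simp only [mem_Icc] at hℓ; omega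
  · exact symLHS_one _ _ _ _ _ (by norm_num)
  · rw [symLHS_two _ _ _ _ _ (by norm_num)]; norm_num
  · rw [symLHS_three _ _ _ _ _ le_rfl]; norm_num

lemma symIneq_one_one_one_one_zero (r : ℕ) : symIneq r 1 1 1 1 0 := by
  norm_num [symIneq]

lemma symSolvable_of_le_three {r : ℕ} (hr : r ≤ 3) : SymSolvable r :=
  ⟨1, 1, 1, 1, 0, Or.inl one_ne_zero, symSolEq_three_one_one_one_one_zero.mono hr,
    symIneq_one_one_one_one_zero r⟩

lemma symIneq_four_iff {x₁ x₂ y₁ y₂ y₃ : ℝ} : symIneq 4 x₁ x₂ y₁ y₂ y₃ ↔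
    x₁ ^ 4 + y₁ ^ 2 + y₂ ^ 2 ≤ (2 * x₂ - x₁) ^ 4 + (y₃ - y₁) ^ 2 + (y₂ + y₃) ^ 2 := by
  have h2 : ((4 : ℕ) : ℝ) / 2 = (2 : ℕ) := by norm_num
  simp only [symIneq, h2, Real.rpow_natCast, Even.pow_abs ⟨1, rfl⟩, Even.pow_abs ⟨2, rfl⟩]

lemma eq_of_symSolEq_four {x₁ x₂ y₁ y₂ y₃ : ℝ} (hnt : nontrivSol x₁ y₁ y₂)
    (h : symSolEq 4 x₁ x₂ y₁ y₂ y₃) : x₁ = 2 * x₂ ∧ y₁ = -y₂ ∧ y₃ = -y₂ := by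
  have e₂ := h 2 (by decide)
  have e₃ := h 3 (by decide)
  have e₄ := h 4 (by decide)
  rw [symLHS_two _ _ _ _ _ (by norm_num)] at e₂
  rw [symLHS_three _ _ _ _ _ (by norm_num)] at e₃
  rw [symLHS_four _ _ _ _ _ le_rfl] at e₄
  have hy₁ : y₁ = 4 * x₁ * x₂ - 2 * x₁ ^ 2 - y₂ := by linear_combination 2 * e₂
  have hx₁y₂ : x₁ ≠ 0 ∨ y₂ ≠ 0 := by
    by_contra! ⟨rfl, rfl⟩
    simp [nontrivSol, hy₁] at hnt
  subst hy₁
  set t := x₂ - x₁ / 2 with ht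
  have htQ : t * ((y₂ - 2 * x₁ * t) ^ 2 / 2 + 2 / 3 * (x₁ * t) ^ 2 + x₁ ^ 4 / 6) = 0 := by
    linear_combination x₁ * e₄ + (y₂ / 2 - 2 * x₁ * x₂ + x₁ ^ 2 / 2) * e₃
  have hQ : 0 < (y₂ - 2 * x₁ * t) ^ 2 / 2 + 2 / 3 * (x₁ * t) ^ 2 + x₁ ^ 4 / 6 := by
    rcases eq_or_ne x₁ 0 with rfl | hx₁
    · have hy₂ : y₂ ≠ 0 := hx₁y₂.resolve_left (not_not.2 rfl)
      simpa using sq_pos_of_ne_zero hy₂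
    · positivity
  have hx₁ : x₁ = 2 * x₂ := by linarith [(mul_eq_zero.1 htQ).resolve_right hQ.ne', ht]
  subst hx₁
  have f₃ : x₂ * (y₂ + y₃) = 0 := by linear_combination -e₃
  have f₄ : (y₂ + y₃) * (y₂ - 4 * x₂ ^ 2) = 0 := by linear_combination 4 * e₄
  refine ⟨rfl, by ring, ?_⟩
  by_contra hy₃
  have hsum : y₂ + y₃ ≠ 0 := fun h0 => hy₃ (by linarith)
  have hx₂ : x₂ = 0 := (mul_eq_zero.1 f₃).resolve_right hsum
  have hy₂ : y₂ = 0 := by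
    have := (mul_eq_zero.1 f₄).resolve_left hsum
    rw [hx₂] at this
    linarith
  simp [hx₂, hy₂] at hx₁y₂

lemma not_symSolvable_four : ¬ SymSolvable 4 := by
  rintro ⟨x₁, x₂, y₁, y₂, y₃, hnt, heq, hineq⟩
  obtain ⟨rfl, rfl, rfl⟩ := eq_of_symSolEq_four hnt heq
  rw [symIneq_four_iff] at hineq
  have hsum : (2 * x₂) ^ 4 + 2 * y₂ ^ 2 ≤ 0 := by linear_combination hineq
  have hx₂4 : 0 ≤ (2 * x₂) ^ 4 := by positivity
  have hy₂2 : 0 ≤ y₂ ^ 2 := sq_nonneg y₂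
  have hx₂ : 2 * x₂ = 0 := pow_eq_zero_iff four_ne_zero |>.1 (by linarith)
  have hy₂ : y₂ = 0 := pow_eq_zero_iff two_ne_zero |>.1 (by linarith)
  simp [nontrivSol, hx₂, hy₂] at hnt

/-- The symmetric order equals 4: the symmetric system (equalities plus inequality) admits a
non-trivial real solution for `r = 3` but no non-trivial real solution for `r = 4`. -/
theorem sym_order_eq_four :
    (∃ x₁ x₂ y₁ y₂ y₃ : ℝ,
      nontrivSol x₁ y₁ y₂ ∧ symSolEq 3 x₁ x₂ y₁ y₂ y₃ ∧ symIneq 3 x₁ x₂ y₁ y₂ y₃) ∧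
    (¬ ∃ x₁ x₂ y₁ y₂ y₃ : ℝ,
      nontrivSol x₁ y₁ y₂ ∧ symSolEq 4 x₁ x₂ y₁ y₂ y₃ ∧ symIneq 4 x₁ x₂ y₁ y₂ y₃) ∧
    symOrder = 4 := by
  refine ⟨symSolvable_of_le_three le_rfl, not_symSolvable_four, ?_⟩
  refine IsLeast.csInf_eq ⟨⟨by norm_num, not_symSolvable_four⟩, ?_⟩
  rintro r ⟨-, hr⟩
  by_contra! hlt
  exact hr (symSolvable_of_le_three (by omega))
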